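/- arXiv:1612.05534 — 5 statements merged into one kernel-verified Lean document; each statement's English description precedes it below -/
import Mathlib

section
/- Let (X,d) be a finite pseudometric space and A ⊆ X a subset with d(i,j) = 0 for all i,j ∈ A; let σ be the split A | X∖A and α ≥ 0. Then LIP(X, d + α·δ_σ) = LIP(X,d) + α·S_σ, where S_σ is the segment conv{v_σ, -v_σ} with v_σ = (|X∖A|/|X|)·𝟙_A − (|A|/|X|)·𝟙_{X∖A}. -/
open Pointwise

/-- The Lipschitz polytope of a pseudometric `d` on a finite set `X`. -/
def LIP {X : Type*} [Fintype X] (d : X → X → ℝ) : Set (X → ℝ) :=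
  {x | (∑ i, x i) = 0 ∧ ∀ i j, x i - x j ≤ d i j}

/-- The indicator pseudometric of a split, given by one of its sides `A`. -/
def splitDelta {X : Type*} [Fintype X] [DecidableEq X] (A : Finset X) (i j : X) : ℝ :=
  if i ∈ A ↔ j ∈ A then 0 else 1

/-- The defining vector of the segment `S_σ` for the split `σ = A | Aᶜ`. -/
noncomputable def splitVec {X : Type*} [Fintype X] [DecidableEq X] (A : Finset X) (i : X) : ℝ :=
  if i ∈ A then (Aᶜ.card : ℝ) / (Fintype.card X) else -((A.card : ℝ) / (Fintype.card X))

/-! Since `splitVec A i - splitVec A j = 𝟙_A i - 𝟙_A j`, whose absolute value is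
`splitDelta A i j`, shifting a point of `LIP d` by `t • splitVec A` with `|t| ≤ α` lands in
`LIP (d + α δ)`. Conversely, `x ∈ LIP (d + α δ)` lies in `t • splitVec A + LIP d` as soon as `t`
is at least every `x i - x j - d i j` and at most every `d k l - x k + x l` (`i, l ∈ A`,
`j, k ∉ A`). Such a `t ∈ [-α, α]` exists because every lower bound is below every upper bound:
`x i ≤ x l` and `d k j ≤ d k l + d l i + d i j` with `d l i = 0`, as `d` vanishes on `A`. -/

open Set

theorem smul_segment_neg_eq_image_Icc {𝕜 E : Type*} [Field 𝕜] [LinearOrder 𝕜]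
    [IsStrictOrderedRing 𝕜] [AddCommGroup E] [Module 𝕜 E] (v : E) {α : 𝕜} (hα : 0 ≤ α) :
    α • segment 𝕜 v (-v) = (· • v) '' Icc (-α) α := by
  have hscale := image_segment 𝕜 (α • LinearMap.id : E →ₗ[𝕜] E).toAffineMap v (-v)
  have hline := image_segment 𝕜 (LinearMap.toSpanSingleton 𝕜 E v).toAffineMap (-α) α
  rw [segment_eq_Icc (by linarith)] at hline
  simp only [LinearMap.coe_toAffineMap, LinearMap.smul_apply, LinearMap.id_apply,
    LinearMap.toSpanSingleton_apply, smul_neg, neg_smul] at hscale hline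
  rw [← Set.image_smul, hscale, hline, segment_symm]

theorem exists_mem_Icc_between_finset {ι κ β : Type*} [LinearOrder β] (s : Finset ι)
    (t : Finset κ) (f : ι → β) (g : κ → β) {a b : β} (hab : a ≤ b) (hf : ∀ i ∈ s, f i ≤ b)
    (hg : ∀ j ∈ t, a ≤ g j) (hfg : ∀ i ∈ s, ∀ j ∈ t, f i ≤ g j) :
    ∃ c ∈ Icc a b, (∀ i ∈ s, f i ≤ c) ∧ ∀ j ∈ t, c ≤ g j :=
  ⟨s.fold max a f, ⟨(Finset.le_fold_max _).2 (.inl le_rfl), (Finset.fold_max_le _).2 ⟨hab, hf⟩⟩,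
    fun i hi => (Finset.le_fold_max _).2 (.inr ⟨i, hi, le_rfl⟩),
    fun j hj => (Finset.fold_max_le _).2 ⟨hg j hj, fun i hi => hfg i hi j hj⟩⟩

section Split

variable {X : Type*} [Fintype X] [DecidableEq X] (A : Finset X)

theorem sum_splitVec : ∑ i, splitVec A i = 0 := by
  simp only [splitVec, Finset.sum_ite, Finset.compl_eq_univ_sdiff, Finset.filter_not,
    Finset.filter_mem_eq_of_subset, Finset.subset_univ, Finset.sum_const, nsmul_eq_mul]
  ring

theorem splitVec_sub_splitVec (i j : X) :
    splitVec A i - splitVec A j = (if i ∈ A then 1 else 0) - (if j ∈ A then 1 else 0) := by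
  have hn : (Fintype.card X : ℝ) ≠ 0 := by
    have : Nonempty X := ⟨i⟩
    positivity
  have hcard : (A.card : ℝ) + Aᶜ.card = Fintype.card X := by
    exact_mod_cast A.card_add_card_compl
  unfold splitVec
  split_ifs <;> field_simp <;> linarith

theorem abs_splitVec_sub_splitVec (i j : X) :
    |splitVec A i - splitVec A j| = splitDelta A i j := by
  rw [splitVec_sub_splitVec, splitDelta]
  by_cases hi : i ∈ A <;> by_cases hj : j ∈ A <;> simp [hi, hj]

theorem add_smul_splitVec_mem_LIP {d : X → X → ℝ} {y : X → ℝ} (hy : y ∈ LIP d) {α t : ℝ}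
    (ht : t ∈ Icc (-α) α) :
    y + t • splitVec A ∈ LIP (fun i j => d i j + α * splitDelta A i j) := by
  refine ⟨by simp [Finset.sum_add_distrib, ← Finset.mul_sum, hy.1, sum_splitVec], fun i j => ?_⟩
  have hshift : t * (splitVec A i - splitVec A j) ≤ α * splitDelta A i j :=
    calc t * (splitVec A i - splitVec A j) ≤ |t| * |splitVec A i - splitVec A j| := by
          rw [← abs_mul]; exact le_abs_self _
      _ ≤ α * splitDelta A i j := by
          rw [abs_splitVec_sub_splitVec]
          exact mul_le_mul_of_nonneg_right (abs_le.2 ht) (by unfold splitDelta; positivity)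
  simp only [Pi.add_apply, Pi.smul_apply, smul_eq_mul]
  linarith [hy.2 i j]

theorem sub_smul_splitVec_mem_LIP {d : X → X → ℝ} {x : X → ℝ} {t : ℝ} (hsum : ∑ i, x i = 0)
    (hsame : ∀ i j, (i ∈ A ↔ j ∈ A) → x i - x j ≤ d i j)
    (hlow : ∀ i ∈ A, ∀ j ∉ A, x i - x j - d i j ≤ t)
    (hupp : ∀ i ∉ A, ∀ j ∈ A, t ≤ d i j - x i + x j) :
    x - t • splitVec A ∈ LIP d := by
  refine ⟨by simp [Finset.sum_sub_distrib, ← Finset.mul_sum, hsum, sum_splitVec], fun i j => ?_⟩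
  have hshift : (x - t • splitVec A) i - (x - t • splitVec A) j
      = x i - x j - t * (splitVec A i - splitVec A j) := by
    simp only [Pi.sub_apply, Pi.smul_apply, smul_eq_mul]
    ring
  rw [hshift, splitVec_sub_splitVec]
  by_cases hi : i ∈ A <;> by_cases hj : j ∈ A <;> simp only [hi, hj, if_true, if_false]
  · simpa using hsame i j (iff_of_true hi hj)
  · linarith [hlow i hi j hj]
  · linarith [hupp i hi j hj]
  · simpa using hsame i j (iff_of_false hi hj)

theorem exists_sub_smul_splitVec_mem_LIP {d : X → X → ℝ}
    (htri : ∀ i j k, d i k ≤ d i j + d j k) (hA0 : ∀ i ∈ A, ∀ j ∈ A, d i j = 0) {α : ℝ}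
    (hα : 0 ≤ α) {x : X → ℝ} (hx : x ∈ LIP (fun i j => d i j + α * splitDelta A i j)) :
    ∃ t ∈ Icc (-α) α, x - t • splitVec A ∈ LIP d := by
  obtain ⟨hsum, hlip⟩ := hx
  have hsame (i j : X) (h : i ∈ A ↔ j ∈ A) : x i - x j ≤ d i j := by
    simpa [splitDelta, h] using hlip i j
  have hcross (i j : X) (h : ¬(i ∈ A ↔ j ∈ A)) : x i - x j ≤ d i j + α := by
    simpa [splitDelta, h] using hlip i j
  have hfg : ∀ p ∈ A ×ˢ Aᶜ, ∀ q ∈ Aᶜ ×ˢ A,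
      x p.1 - x p.2 - d p.1 p.2 ≤ d q.1 q.2 - x q.1 + x q.2 := by
    rintro ⟨i, j⟩ hij ⟨k, l⟩ hkl
    simp only [Finset.mem_product, Finset.mem_compl] at hij hkl
    have hil : x i - x l ≤ 0 := by
      simpa [hA0 i hij.1 l hkl.2] using hsame i l (iff_of_true hij.1 hkl.2)
    have hkj : x k - x j ≤ d k j := hsame k j (iff_of_false hkl.1 hij.2)
    have hli : d l i = 0 := hA0 l hkl.2 i hij.1
    linarith [htri k l j, htri l i j]
  have hf : ∀ p ∈ A ×ˢ Aᶜ, x p.1 - x p.2 - d p.1 p.2 ≤ α := by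
    rintro ⟨i, j⟩ hij
    simp only [Finset.mem_product, Finset.mem_compl] at hij
    linarith [hcross i j (by tauto)]
  have hg : ∀ q ∈ Aᶜ ×ˢ A, -α ≤ d q.1 q.2 - x q.1 + x q.2 := by
    rintro ⟨i, j⟩ hij
    simp only [Finset.mem_product, Finset.mem_compl] at hij
    linarith [hcross i j (by tauto)]
  obtain ⟨t, ht, hlow, hupp⟩ := exists_mem_Icc_between_finset _ _ _ _ (by linarith) hf hg hfg
  exact ⟨t, ht, sub_smul_splitVec_mem_LIP A hsum hsame
    (fun i hi j hj => hlow (i, j) (by simp [hi, hj]))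
    (fun i hi j hj => hupp (i, j) (by simp [hi, hj]))⟩

end Split

theorem lip_leaf_split_general {X : Type*} [Fintype X] [DecidableEq X] (d : X → X → ℝ)
    (htri : ∀ i j k, d i k ≤ d i j + d j k)
    (A : Finset X)
    (hA0 : ∀ i ∈ A, ∀ j ∈ A, d i j = 0) (α : ℝ) (hα : 0 ≤ α) :
    LIP (fun i j => d i j + α * splitDelta A i j) =
      LIP d + α • segment ℝ (splitVec A) (-(splitVec A)) := by
  rw [smul_segment_neg_eq_image_Icc _ hα]
  ext x
  constructor
  · intro hx
    obtain ⟨t, ht, hmem⟩ := exists_sub_smul_splitVec_mem_LIP A htri hA0 hα hx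
    exact ⟨_, hmem, _, ⟨t, ht, rfl⟩, sub_add_cancel x _⟩
  · rintro ⟨y, hy, _, ⟨t, ht, rfl⟩, rfl⟩
    exact add_smul_splitVec_mem_LIP A hy ht

theorem lip_leaf_split {X : Type*} [Fintype X] [DecidableEq X] (d : X → X → ℝ)
    (hsymm : ∀ i j, d i j = d j i) (hnonneg : ∀ i j, 0 ≤ d i j)
    (hdiag : ∀ i, d i i = 0) (htri : ∀ i j k, d i k ≤ d i j + d j k)
    (A : Finset X) (hA : A.Nonempty) (hAc : Aᶜ.Nonempty)
    (hA0 : ∀ i ∈ A, ∀ j ∈ A, d i j = 0) (α : ℝ) (hα : 0 ≤ α) :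
    LIP (fun i j => d i j + α * splitDelta A i j) =
      LIP d + α • segment ℝ (splitVec A) (-(splitVec A)) :=
  lip_leaf_split_general d htri A hA0 α hα
end

section
/- If a pseudometric d on a finite set X is a nonnegative linear combination of split pseudometrics, d = Σ_{σ∈S} α_σ δ_σ, then d satisfies the four-point condition: for all x,y,z,w ∈ X, d(x,y)+d(z,w) ≤ max{ d(x,z)+d(y,w), d(x,w)+d(y,z) }, provided the split system S is pairwise compatible. -/
section Split

variable {X : Type*}

/-- The split with side `A` restricts to the quartet split `ab | cd` of `{a, b, c, d}`. -/
def InducesQuartet (A : Finset X) (a b c d : X) : Prop :=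
  (a ∈ A ↔ b ∈ A) ∧ (c ∈ A ↔ d ∈ A) ∧ ¬(a ∈ A ↔ c ∈ A)

theorem InducesQuartet.not_inducesQuartet_swap {A : Finset X} {x y z w : X}
    (h : InducesQuartet A x z y w) : ¬InducesQuartet A x w y z := by
  unfold InducesQuartet at *
  tauto

variable [Fintype X] [DecidableEq X]

def SplitCompatible (A B : Finset X) : Prop :=
  A ∩ B = ∅ ∨ A ∩ Bᶜ = ∅ ∨ Aᶜ ∩ B = ∅ ∨ Aᶜ ∩ Bᶜ = ∅

theorem splitDelta_comm (A : Finset X) (i j : X) : splitDelta A i j = splitDelta A j i := by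
  simp only [splitDelta, Iff.comm]

theorem splitDelta_add_le_of_not_inducesQuartet {A : Finset X} {x y z w : X}
    (h : ¬InducesQuartet A x z y w) :
    splitDelta A x y + splitDelta A z w ≤ splitDelta A x z + splitDelta A y w := by
  unfold InducesQuartet at h
  unfold splitDelta
  by_cases hx : x ∈ A <;> by_cases hy : y ∈ A <;> by_cases hz : z ∈ A <;> by_cases hw : w ∈ A <;>
    simp_all

theorem SplitCompatible.not_inducesQuartet_swap {A B : Finset X} (hAB : SplitCompatible A B)
    {x y z w : X} (hA : InducesQuartet A x z y w) : ¬InducesQuartet B x w y z := by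
  unfold SplitCompatible at hAB
  unfold InducesQuartet at *
  simp only [Finset.eq_empty_iff_forall_notMem, Finset.mem_inter, Finset.mem_compl] at hAB
  rcases hAB with h | h | h | h <;>
    (have := h x; have := h y; have := h z; have := h w; itauto)

theorem sum_splitDelta_add_le {S : Finset (Finset X)} {α : Finset X → ℝ}
    (hα : ∀ A ∈ S, 0 ≤ α A) {a b c d e f g h : X}
    (hle : ∀ A ∈ S, splitDelta A a b + splitDelta A c d ≤ splitDelta A e f + splitDelta A g h) :
    ∑ A ∈ S, α A * splitDelta A a b + ∑ A ∈ S, α A * splitDelta A c d ≤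
      ∑ A ∈ S, α A * splitDelta A e f + ∑ A ∈ S, α A * splitDelta A g h := by
  simp only [← Finset.sum_add_distrib, ← mul_add]
  exact Finset.sum_le_sum fun A hA => mul_le_mul_of_nonneg_left (hle A hA) (hα A hA)

end Split

theorem four_point_condition_of_compatible_general {X : Type*} [Fintype X] [DecidableEq X]
    (S : Finset (Finset X))
    (hcompat : ∀ A ∈ S, ∀ B ∈ S, A ≠ B →
      A ∩ B = ∅ ∨ A ∩ Bᶜ = ∅ ∨ Aᶜ ∩ B = ∅ ∨ Aᶜ ∩ Bᶜ = ∅)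
    (α : Finset X → ℝ) (hα : ∀ A ∈ S, 0 ≤ α A)
    (d : X → X → ℝ) (hd : ∀ i j, d i j = ∑ A ∈ S, α A * splitDelta A i j) :
    ∀ x y z w : X, d x y + d z w ≤ max (d x z + d y w) (d x w + d y z) := by
  intro x y z w
  simp only [hd]
  by_cases hxz : ∃ A ∈ S, InducesQuartet A x z y w
  · obtain ⟨A, hA, hAq⟩ := hxz
    have hxw : ∀ B ∈ S, ¬InducesQuartet B x w y z := fun B hB => by
      rcases eq_or_ne A B with rfl | hne
      · exact hAq.not_inducesQuartet_swap
      · exact SplitCompatible.not_inducesQuartet_swap (hcompat A hA B hB hne) hAq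
    refine le_max_of_le_right (sum_splitDelta_add_le hα fun B hB => ?_)
    simpa only [splitDelta_comm B w z] using splitDelta_add_le_of_not_inducesQuartet (hxw B hB)
  · push Not at hxz
    exact le_max_of_le_left
      (sum_splitDelta_add_le hα fun A hA => splitDelta_add_le_of_not_inducesQuartet (hxz A hA))

theorem four_point_condition_of_compatible {X : Type*} [Fintype X] [DecidableEq X]
    (S : Finset (Finset X)) (hS : ∀ A ∈ S, A.Nonempty ∧ Aᶜ.Nonempty)
    (hcompat : ∀ A ∈ S, ∀ B ∈ S, A ≠ B →
      A ∩ B = ∅ ∨ A ∩ Bᶜ = ∅ ∨ Aᶜ ∩ B = ∅ ∨ Aᶜ ∩ Bᶜ = ∅)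
    (α : Finset X → ℝ) (hα : ∀ A ∈ S, 0 ≤ α A)
    (d : X → X → ℝ) (hd : ∀ i j, d i j = ∑ A ∈ S, α A * splitDelta A i j) :
    ∀ x y z w : X, d x y + d z w ≤ max (d x z + d y w) (d x w + d y z) :=
  four_point_condition_of_compatible_general S hcompat α hα d hd
end

section
/- Let S be a compatible system of splits of a finite set X with nonnegative weights α, and let d_α = Σ_{σ∈S} α_σ δ_σ. Then the intersection of the hyperplanes ∩_{σ∈S} H_σ, where H_σ = {x ∈ ℝ^X : ⟨x, v_σ⟩ = 0} with v_σ = (|B_σ|/n)𝟙_{A_σ} − (|A_σ|/n)𝟙_{B_σ}, equals the linear span of the vectors e_{ij} = 𝟙_i − 𝟙_j over all pairs i,j with d_α(i,j) = 0 (assuming all α_σ > 0). -/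
/-- The vector `e_{ij} = 𝟙_i - 𝟙_j` in `ℝ^X`. -/
def eVec {X : Type*} [DecidableEq X] (i j : X) (k : X) : ℝ :=
  (if k = i then 1 else 0) - (if k = j then 1 else 0)

/-- Key combinatorial lemma: if a family of subsets is pairwise "nested or covering",
each set sums to zero, and the total sum is zero, then the intersection sums to zero. -/
lemma interSumZero {X : Type*} [Fintype X] [DecidableEq X] (x : X → ℝ)
    (htot : ∑ k, x k = 0) :
    ∀ F : Finset (Finset X),
      (∀ A ∈ F, ∀ B ∈ F, A ⊆ B ∨ B ⊆ A ∨ A ∪ B = Finset.univ) →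
      (∀ A ∈ F, ∑ k ∈ A, x k = 0) →
      ∑ k ∈ F.inf id, x k = 0 := by
  intro F
  induction F using Finset.strongInduction with
  | _ F ih =>
    intro hpair hzero
    rcases F.eq_empty_or_nonempty with rfl | hne
    · simpa [Finset.top_eq_univ] using htot
    · obtain ⟨M, hM, hmin⟩ := F.exists_minimal hne
      set G := F.filter (fun B => ¬ M ⊆ B) with hGdef
      have hGF : G ⊆ F := Finset.filter_subset _ _
      have hMG : M ∉ G := by simp [hGdef]
      have hGlt : G ⊂ F := ⟨hGF, fun h => hMG (h hM)⟩
      have hGcover : ∀ B ∈ G, Mᶜ ⊆ B := by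
        intro B hB
        obtain ⟨hBF, hnsub⟩ := Finset.mem_filter.mp hB
        rcases hpair M hM B hBF with h | h | h
        · exact absurd h hnsub
        · exfalso
          exact hnsub (hmin hBF h)
        · intro k hk
          have hku : k ∈ M ∪ B := by rw [h]; exact Finset.mem_univ k
          rcases Finset.mem_union.mp hku with hkM | hkB
          · exact absurd hkM (Finset.mem_compl.mp hk)
          · exact hkB
      have hinf : F.inf id = M ∩ G.inf id := by
        apply le_antisymm
        · exact Finset.subset_inter (Finset.le_iff_subset.mp (Finset.inf_le hM))
            (Finset.le_iff_subset.mp (Finset.le_inf fun B hB => Finset.inf_le (hGF hB)))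
        · apply Finset.le_inf
          intro B hB
          by_cases hMB : M ⊆ B
          · exact le_trans inf_le_left hMB
          · exact le_trans inf_le_right (Finset.inf_le (Finset.mem_filter.mpr ⟨hB, hMB⟩))
      set I := G.inf id with hI
      have hMcI : Mᶜ ⊆ I := Finset.le_inf fun B hB => hGcover B hB
      have hI0 : ∑ k ∈ I, x k = 0 :=
        ih G hGlt (fun A hA B hB => hpair A (hGF hA) B (hGF hB))
          (fun A hA => hzero A (hGF hA))
      have hdisj : Disjoint (M ∩ I) Mᶜ :=
        Finset.disjoint_left.mpr fun k hk hk' =>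
          (Finset.mem_compl.mp hk') (Finset.mem_inter.mp hk).1
      have hsplit : ∑ k ∈ I, x k = ∑ k ∈ M ∩ I, x k + ∑ k ∈ Mᶜ, x k := by
        rw [← Finset.sum_union hdisj]
        apply Finset.sum_congr _ (fun _ _ => rfl)
        ext k
        simp only [Finset.mem_union, Finset.mem_inter, Finset.mem_compl]
        constructor
        · intro hkI
          by_cases hkM : k ∈ M
          · exact Or.inl ⟨hkM, hkI⟩
          · exact Or.inr hkM
        · rintro (⟨-, h⟩ | h)
          · exact h
          · exact hMcI (Finset.mem_compl.mpr h)
      have hMc : ∑ k ∈ Mᶜ, x k = 0 := by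
        have h1 := Finset.sum_add_sum_compl M x
        have h2 := hzero M hM
        rw [h2, htot] at h1
        linarith
      rw [hinf]
      rw [hsplit, hMc] at hI0
      linarith
/-- Two sides of compatible splits, both containing the point `i`, are nested or cover `X`. -/
lemma sideTrichotomy {X : Type*} [Fintype X] [DecidableEq X] (A B : Finset X) (i : X)
    (h : A ∩ B = ∅ ∨ A ∩ Bᶜ = ∅ ∨ Aᶜ ∩ B = ∅ ∨ Aᶜ ∩ Bᶜ = ∅) :
    (if i ∈ A then A else Aᶜ) ⊆ (if i ∈ B then B else Bᶜ) ∨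
    (if i ∈ B then B else Bᶜ) ⊆ (if i ∈ A then A else Aᶜ) ∨
    (if i ∈ A then A else Aᶜ) ∪ (if i ∈ B then B else Bᶜ) = Finset.univ := by
  set P := if i ∈ A then A else Aᶜ with hPdef
  set Q := if i ∈ B then B else Bᶜ with hQdef
  have hiP : i ∈ P := by by_cases h' : i ∈ A <;> simp [hPdef, h']
  have hiQ : i ∈ Q := by by_cases h' : i ∈ B <;> simp [hQdef, h']
  have h4 : P ∩ Q = ∅ ∨ P ∩ Qᶜ = ∅ ∨ Pᶜ ∩ Q = ∅ ∨ Pᶜ ∩ Qᶜ = ∅ := by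
    by_cases hA : i ∈ A <;> by_cases hB : i ∈ B <;>
      simp only [hPdef, hQdef, hA, hB, if_true, if_false, compl_compl] <;> tauto
  rcases h4 with h' | h' | h' | h'
  · exact absurd h' (Finset.ne_empty_of_mem (Finset.mem_inter.mpr ⟨hiP, hiQ⟩))
  · left
    intro k hk
    by_contra hkQ
    have : k ∈ P ∩ Qᶜ := Finset.mem_inter.mpr ⟨hk, Finset.mem_compl.mpr hkQ⟩
    rw [h'] at this
    exact absurd this (Finset.notMem_empty k)
  · right; left
    intro k hk
    by_contra hkP
    have : k ∈ Pᶜ ∩ Q := Finset.mem_inter.mpr ⟨Finset.mem_compl.mpr hkP, hk⟩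
    rw [h'] at this
    exact absurd this (Finset.notMem_empty k)
  · right; right
    ext k
    simp only [Finset.mem_union, Finset.mem_univ, iff_true]
    by_contra hk
    push_neg at hk
    have : k ∈ Pᶜ ∩ Qᶜ :=
      Finset.mem_inter.mpr ⟨Finset.mem_compl.mpr hk.1, Finset.mem_compl.mpr hk.2⟩
    rw [h'] at this
    exact absurd this (Finset.notMem_empty k)

theorem hyperplane_intersection_eq_span {X : Type*} [Fintype X] [DecidableEq X]
    (S : Finset (Finset X)) (hS : ∀ A ∈ S, A.Nonempty ∧ Aᶜ.Nonempty)
    (hcompat : ∀ A ∈ S, ∀ B ∈ S, A ≠ B →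
      A ∩ B = ∅ ∨ A ∩ Bᶜ = ∅ ∨ Aᶜ ∩ B = ∅ ∨ Aᶜ ∩ Bᶜ = ∅)
    (α : Finset X → ℝ) (hα : ∀ A ∈ S, 0 < α A)
    (d : X → X → ℝ) (hd : ∀ i j, d i j = ∑ A ∈ S, α A * splitDelta A i j) :
    {x : X → ℝ | (∑ i, x i) = 0 ∧ ∀ A ∈ S, (∑ k, x k * splitVec A k) = 0} =
      (Submodule.span ℝ {v : X → ℝ | ∃ i j, d i j = 0 ∧ v = eVec i j} : Set (X → ℝ)) := by
  classical
  rcases isEmpty_or_nonempty X with hX | hX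
  · ext x
    simp only [Set.mem_setOf_eq, SetLike.mem_coe]
    constructor
    · intro _
      have hx0 : x = 0 := funext fun i => (hX.elim i)
      rw [hx0]
      exact Submodule.zero_mem _
    · intro _
      exact ⟨by simp, fun A hA => by simp⟩
  · have hn : (0:ℝ) < Fintype.card X := by exact_mod_cast Fintype.card_pos
    have hne : (Fintype.card X : ℝ) ≠ 0 := ne_of_gt hn
    -- `d i j = 0` iff `i` and `j` are on the same side of every split
    have hdzero : ∀ i j, d i j = 0 ↔ ∀ A ∈ S, (i ∈ A ↔ j ∈ A) := by
      intro i j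
      rw [hd]
      rw [Finset.sum_eq_zero_iff_of_nonneg (by
        intro A hA
        apply mul_nonneg (hα A hA).le
        unfold splitDelta; split <;> norm_num)]
      constructor
      · intro h A hA
        have h1 := h A hA
        have hδ : splitDelta A i j = 0 := by
          rcases mul_eq_zero.mp h1 with h' | h'
          · exact absurd h' (ne_of_gt (hα A hA))
          · exact h'
        by_contra hc
        simp [splitDelta, hc] at hδ
      · intro h A hA
        simp [splitDelta, h A hA]
    -- the inner product with `splitVec A` is just the sum over `A`
    have hip : ∀ (x : X → ℝ), (∑ i, x i) = 0 → ∀ A : Finset X,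
        (∑ k, x k * splitVec A k) = (∑ k ∈ A, x k) := by
      intro x hx A
      have hsplit : (∑ k, x k * splitVec A k)
          = ∑ k ∈ A, x k * splitVec A k + ∑ k ∈ Aᶜ, x k * splitVec A k :=
        (Finset.sum_add_sum_compl A _).symm
      have h1 : ∑ k ∈ A, x k * splitVec A k
          = (∑ k ∈ A, x k) * ((Aᶜ.card : ℝ)/(Fintype.card X)) := by
        rw [Finset.sum_mul]
        exact Finset.sum_congr rfl fun k hk => by rw [splitVec, if_pos hk]
      have h2 : ∑ k ∈ Aᶜ, x k * splitVec A k
          = (∑ k ∈ Aᶜ, x k) * (-((A.card : ℝ)/(Fintype.card X))) := by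
        rw [Finset.sum_mul]
        exact Finset.sum_congr rfl fun k hk =>
          by rw [splitVec, if_neg (Finset.mem_compl.mp hk)]
      have hcompl : ∑ k ∈ Aᶜ, x k = - ∑ k ∈ A, x k := by
        have h3 := Finset.sum_add_sum_compl A x
        rw [hx] at h3
        linarith
      have hcard : (A.card : ℝ) + (Aᶜ.card : ℝ) = Fintype.card X := by
        exact_mod_cast Finset.card_add_card_compl A
      rw [hsplit, h1, h2, hcompl]
      field_simp
      linear_combination (∑ k ∈ A, x k) * hcard
    apply Set.Subset.antisymm
    · -- hard direction: hyperplane intersection ⊆ span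
      rintro x ⟨htot, hhyp⟩
      have hAsum : ∀ A ∈ S, ∑ k ∈ A, x k = 0 := fun A hA => by
        rw [← hip x htot A]; exact hhyp A hA
      have hAcsum : ∀ A ∈ S, ∑ k ∈ Aᶜ, x k = 0 := by
        intro A hA
        have h3 := Finset.sum_add_sum_compl A x
        rw [htot, hAsum A hA] at h3
        linarith
      -- equivalence classes
      set C : X → Finset X := fun i => (S.image (fun A => if i ∈ A then A else Aᶜ)).inf id
        with hCdef
      have hmemC : ∀ i k, k ∈ C i ↔ ∀ A ∈ S, (i ∈ A ↔ k ∈ A) := by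
        intro i k
        simp only [hCdef, Finset.mem_inf, id]
        constructor
        · intro h A hA
          have h1 := h (if i ∈ A then A else Aᶜ) (Finset.mem_image_of_mem _ hA)
          by_cases hiA : i ∈ A
          · rw [if_pos hiA] at h1
            exact iff_of_true hiA h1
          · rw [if_neg hiA] at h1
            exact iff_of_false hiA (Finset.mem_compl.mp h1)
        · intro h P hP
          obtain ⟨A, hA, rfl⟩ := Finset.mem_image.mp hP
          by_cases hiA : i ∈ A
          · rw [if_pos hiA]; exact (h A hA).mp hiA
          · rw [if_neg hiA]
            exact Finset.mem_compl.mpr (fun hk => hiA ((h A hA).mpr hk))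
      have hiC : ∀ i, i ∈ C i := fun i => (hmemC i i).mpr (fun A _ => Iff.rfl)
      have hCeq : ∀ i j, (∀ A ∈ S, (i ∈ A ↔ j ∈ A)) → C i = C j := by
        intro i j hij
        ext k
        rw [hmemC, hmemC]
        constructor <;> intro h A hA
        · exact ((hij A hA).symm).trans (h A hA)
        · exact (hij A hA).trans (h A hA)
      have hCsum : ∀ i, ∑ k ∈ C i, x k = 0 := by
        intro i
        apply interSumZero x htot
        · intro P hP Q hQ
          obtain ⟨A, hA, rfl⟩ := Finset.mem_image.mp hP
          obtain ⟨B, hB, rfl⟩ := Finset.mem_image.mp hQ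
          by_cases hAB : A = B
          · subst hAB; left; exact subset_rfl
          · exact sideTrichotomy A B i (hcompat A hA B hB hAB)
        · intro P hP
          obtain ⟨A, hA, rfl⟩ := Finset.mem_image.mp hP
          by_cases hiA : i ∈ A
          · rw [if_pos hiA]; exact hAsum A hA
          · rw [if_neg hiA]; exact hAcsum A hA
      -- representatives
      set rep : Finset X → X := fun s => if h : ∃ k, k ∈ s then h.choose
        else Classical.arbitrary X with hrepdef
      set r : X → X := fun i => rep (C i) with hrdef
      have hrC : ∀ i, r i ∈ C i := by
        intro i
        have he : ∃ k, k ∈ C i := ⟨i, hiC i⟩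
        simp only [hrdef, hrepdef, dif_pos he]
        exact he.choose_spec
      have hreq : ∀ i j, C i = C j → r i = r j := by
        intro i j h
        simp only [hrdef]
        rw [h]
      have key : ∀ k, ∑ j ∈ Finset.univ.filter (fun j => k = r j), x j = 0 := by
        intro k
        by_cases hk : r k = k
        · have hf : Finset.univ.filter (fun j => k = r j) = C k := by
            ext j
            simp only [Finset.mem_filter, Finset.mem_univ, true_and]
            constructor
            · intro h
              have h1 : ∀ A ∈ S, (j ∈ A ↔ k ∈ A) := by
                rw [h]; exact (hmemC j (r j)).mp (hrC j)
              exact (hmemC k j).mpr (fun A hA => (h1 A hA).symm)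
            · intro hj
              have h1 := (hmemC k j).mp hj
              have h2 := hreq k j (hCeq k j h1)
              rw [← h2, hk]
          rw [hf]; exact hCsum k
        · have hf : Finset.univ.filter (fun j => k = r j) = ∅ := by
            ext j
            simp only [Finset.mem_filter, Finset.mem_univ, true_and,
              Finset.notMem_empty, iff_false]
            intro h
            have h1 : ∀ A ∈ S, (j ∈ A ↔ k ∈ A) := by
              rw [h]; exact (hmemC j (r j)).mp (hrC j)
            have h2 := hreq j k (hCeq j k h1)
            apply hk
            rw [← h2]
            exact h.symm
          rw [hf, Finset.sum_empty]
      have hxdecomp : x = ∑ j, x j • eVec j (r j) := by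
        funext k
        rw [Finset.sum_apply]
        simp only [Pi.smul_apply, smul_eq_mul, eVec]
        simp only [mul_sub, mul_ite, mul_one, mul_zero]
        rw [Finset.sum_sub_distrib]
        rw [Finset.sum_ite_eq Finset.univ k x]
        have h2 : (∑ j, if k = r j then x j else 0)
            = ∑ j ∈ Finset.univ.filter (fun j => k = r j), x j :=
          (Finset.sum_filter _ _).symm
        rw [h2, key k]
        simp
      show x ∈ Submodule.span ℝ {v : X → ℝ | ∃ i j, d i j = 0 ∧ v = eVec i j}
      rw [hxdecomp]
      apply Submodule.sum_mem
      intro j _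
      apply Submodule.smul_mem
      apply Submodule.subset_span
      refine ⟨j, r j, ?_, rfl⟩
      rw [hdzero]
      exact (hmemC j (r j)).mp (hrC j)
    · -- easy direction: span ⊆ hyperplane intersection
      set P : Submodule ℝ (X → ℝ) :=
        { carrier := {x : X → ℝ | (∑ i, x i) = 0 ∧
            ∀ A ∈ S, (∑ k, x k * splitVec A k) = 0}
          add_mem' := by
            rintro a b ⟨ha1, ha2⟩ ⟨hb1, hb2⟩
            constructor
            · simp only [Pi.add_apply]
              rw [Finset.sum_add_distrib, ha1, hb1, add_zero]
            · intro A hA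
              simp only [Pi.add_apply, add_mul]
              rw [Finset.sum_add_distrib, ha2 A hA, hb2 A hA, add_zero]
          zero_mem' := ⟨by simp, fun A hA => by simp⟩
          smul_mem' := by
            rintro c a ⟨ha1, ha2⟩
            constructor
            · simp only [Pi.smul_apply, smul_eq_mul]
              rw [← Finset.mul_sum, ha1, mul_zero]
            · intro A hA
              simp only [Pi.smul_apply, smul_eq_mul, mul_assoc]
              rw [← Finset.mul_sum, ha2 A hA, mul_zero] } with hPdef
      have hle : Submodule.span ℝ {v : X → ℝ | ∃ i j, d i j = 0 ∧ v = eVec i j} ≤ P := by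
        apply Submodule.span_le.mpr
        rintro v ⟨i, j, hdij, rfl⟩
        have hrel : ∀ A ∈ S, (i ∈ A ↔ j ∈ A) := (hdzero i j).mp hdij
        refine ⟨?_, ?_⟩
        · simp [eVec, Finset.sum_sub_distrib, Finset.sum_ite_eq' Finset.univ]
        · intro A hA
          have hiff := hrel A hA
          have hterm : ∀ k, eVec i j k * splitVec A k
              = (if k = i then splitVec A k else 0) - (if k = j then splitVec A k else 0) := by
            intro k
            simp only [eVec, sub_mul, ite_mul, one_mul, zero_mul]
          rw [Finset.sum_congr rfl (fun k _ => hterm k), Finset.sum_sub_distrib,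
            Finset.sum_ite_eq' Finset.univ i, Finset.sum_ite_eq' Finset.univ j]
          simp only [Finset.mem_univ, if_true]
          by_cases hiA : i ∈ A
          · rw [splitVec, splitVec, if_pos hiA, if_pos (hiff.mp hiA), sub_self]
          · rw [splitVec, splitVec, if_neg hiA, if_neg (fun h => hiA (hiff.mpr h)), sub_self]
      intro v hv
      exact hle hv
end

section
/- Let X be a finite set, n = |X| ≥ 2, and let d(i,j) = 1 for all i ≠ j. Then the Lipschitz polytope LIP(X,d) = {x ∈ ℝ^X : Σxᵢ = 0, xᵢ − xⱼ ≤ 1 ∀i,j} is the Minkowski sum Σ_{k∈X} (1/2)·conv{v_k, −v_k} where v_k = ((n−1)/n)𝟙_k − (1/n)𝟙_{X∖{k}}. -/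
open Pointwise

/-!
Since `v k = 𝟙_k - (1/n) 𝟙`, the zonotope is the image of the cube `[-1/2, 1/2]^X` under
`c ↦ c - mean c`, the orthogonal projection onto the hyperplane `∑ xᵢ = 0`.
This projection preserves all differences `cᵢ - cⱼ`, which on the cube are at most `1`;
conversely a point `x` of `LIP` is the projection of `x - min x - 1/2`, which lies in the cube.
-/

lemma half_smul_segment_neg_eq_image_Icc {E : Type*} [AddCommGroup E] [Module ℝ E] (v : E) :
    (1/2 : ℝ) • segment ℝ v (-v) = (· • v) '' Set.Icc (-(1/2) : ℝ) (1/2) := by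
  rw [segment_eq_image]
  ext x
  simp only [Set.mem_smul_set, Set.mem_image, Set.mem_Icc]
  constructor
  · rintro ⟨y, ⟨θ, ⟨h0, h1⟩, rfl⟩, rfl⟩
    exact ⟨1/2 - θ, ⟨by linarith, by linarith⟩, by module⟩
  · rintro ⟨c, ⟨h0, h1⟩, rfl⟩
    exact ⟨_, ⟨1/2 - c, ⟨by linarith, by linarith⟩, rfl⟩, by module⟩

lemma sum_image_smul_eq_image_pi {ι R E : Type*} [Fintype ι] [Semiring R] [AddCommMonoid E]
    [Module R E] (v : ι → E) (s : Set R) :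
    ∑ k, (· • v k) '' s = (fun c : ι → R => ∑ k, c k • v k) '' Set.univ.pi (fun _ => s) := by
  ext x
  rw [Set.mem_fintype_sum]
  constructor
  · rintro ⟨g, hg, rfl⟩
    choose c hc hcg using hg
    exact ⟨c, fun k _ => hc k, Finset.sum_congr rfl fun k _ => hcg k⟩
  · rintro ⟨c, hc, rfl⟩
    exact ⟨_, fun k => ⟨c k, hc k trivial, rfl⟩, rfl⟩

section SubMean

variable {X : Type*} [Fintype X]

noncomputable def subMean (c : X → ℝ) : X → ℝ := fun i => c i - (∑ k, c k) / Fintype.card X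

lemma cast_card_ne_zero_of_inhabited (i : X) : (Fintype.card X : ℝ) ≠ 0 :=
  have : Nonempty X := ⟨i⟩
  Nat.cast_ne_zero.mpr Fintype.card_ne_zero

lemma sum_subMean (c : X → ℝ) : ∑ i, subMean c i = 0 := by
  -- for empty `X` the mean is the junk value `0 / 0 = 0`, and the sum is empty anyway
  have hcard : (Fintype.card X : ℝ) = 0 → ∑ k, c k = 0 := by
    intro h
    have : IsEmpty X := Fintype.card_eq_zero_iff.mp (by exact_mod_cast h)
    exact Finset.sum_of_isEmpty _
  simp only [subMean, Finset.sum_sub_distrib, Finset.sum_const, Finset.card_univ, nsmul_eq_mul,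
    mul_div_cancel_of_imp' hcard, sub_self]

lemma subMean_sub_subMean (c : X → ℝ) (i j : X) : subMean c i - subMean c j = c i - c j := by
  simp only [subMean]
  ring

lemma subMean_sub_const (c : X → ℝ) (a : ℝ) : subMean (fun i => c i - a) = subMean c := by
  funext i
  have := cast_card_ne_zero_of_inhabited i
  simp only [subMean, Finset.sum_sub_distrib, Finset.sum_const, Finset.card_univ, nsmul_eq_mul]
  field_simp
  ring

lemma subMean_eq_self (c : X → ℝ) (hc : ∑ i, c i = 0) : subMean c = c := by
  funext i
  simp only [subMean, hc, zero_div, sub_zero]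

variable [DecidableEq X]

lemma sum_smul_eq_subMean {v : X → X → ℝ}
    (hv : ∀ k i, v k i = if i = k then ((Fintype.card X : ℝ) - 1) / (Fintype.card X)
      else -(1 / (Fintype.card X : ℝ))) :
    (fun c : X → ℝ => ∑ k, c k • v k) = subMean := by
  funext c i
  have hn := cast_card_ne_zero_of_inhabited i
  have hterm : ∀ k, (c k • v k) i = (if i = k then c k else 0) - c k / Fintype.card X := by
    intro k
    rw [Pi.smul_apply, smul_eq_mul, hv k i]
    split_ifs
    · field_simp
    · ring
  rw [Finset.sum_apply, Finset.sum_congr rfl fun k _ => hterm k, Finset.sum_sub_distrib,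
    Finset.sum_ite_eq, if_pos (Finset.mem_univ i), ← Finset.sum_div, subMean]

lemma LIP_unit_eq_image_subMean :
    LIP (fun i j : X => if i = j then (0:ℝ) else 1) =
      subMean '' Set.univ.pi (fun _ => Set.Icc (-(1/2) : ℝ) (1/2)) := by
  ext x
  constructor
  · rintro ⟨hsum, hlip⟩
    refine ⟨fun i => x i - (⨅ j, x j) - 1/2, fun k _ => ?_, ?_⟩
    · have hmin : (⨅ j, x j) ≤ x k := ciInf_le (Set.finite_range x).bddBelow k
      have : Nonempty X := ⟨k⟩
      obtain ⟨j, hj⟩ := exists_eq_ciInf_of_finite (f := x)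
      have hosc : x k - x j ≤ 1 := by
        have := hlip k j
        dsimp only at this
        split_ifs at this <;> linarith
      constructor <;> linarith
    · rw [subMean_sub_const, subMean_sub_const, subMean_eq_self x hsum]
  · rintro ⟨c, hc, rfl⟩
    refine ⟨sum_subMean c, fun i j => ?_⟩
    rw [subMean_sub_subMean]
    obtain ⟨hi₀, hi₁⟩ := hc i trivial
    obtain ⟨hj₀, hj₁⟩ := hc j trivial
    dsimp only
    split_ifs with h
    · simp [h]
    · linarith

end SubMean

theorem lip_unit_metric_zonotope_general {X : Type*} [Fintype X] [DecidableEq X]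
    (v : X → X → ℝ)
    (hv : ∀ k i, v k i = if i = k then ((Fintype.card X : ℝ) - 1) / (Fintype.card X)
      else -(1 / (Fintype.card X : ℝ))) :
    LIP (fun i j => if i = j then (0:ℝ) else 1) =
      ∑ k : X, (1/2 : ℝ) • segment ℝ (v k) (-(v k)) := by
  simp only [half_smul_segment_neg_eq_image_Icc]
  rw [sum_image_smul_eq_image_pi, sum_smul_eq_subMean hv, LIP_unit_eq_image_subMean]

theorem lip_unit_metric_zonotope {X : Type*} [Fintype X] [DecidableEq X]
    (hcard : 2 ≤ Fintype.card X)
    (v : X → X → ℝ)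
    (hv : ∀ k i, v k i = if i = k then ((Fintype.card X : ℝ) - 1) / (Fintype.card X)
      else -(1 / (Fintype.card X : ℝ))) :
    LIP (fun i j => if i = j then (0:ℝ) else 1) =
      ∑ k : X, (1/2 : ℝ) • segment ℝ (v k) (-(v k)) :=
  lip_unit_metric_zonotope_general v hv
end

section
/- Let σ = A|B and τ = C|D be two distinct compatible splits of a finite set X. Then the vectors v_σ = (|B|/n)𝟙_A − (|A|/n)𝟙_B and v_τ = (|D|/n)𝟙_C − (|C|/n)𝟙_D are linearly independent in ℝ^X. -/
section

open Finset

variable {X : Type*} [Fintype X] [DecidableEq X]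

lemma splitVec_apply (A : Finset X) (i : X) :
    splitVec A i = (if i ∈ A then 1 else 0) - (A.card : ℝ) / Fintype.card X := by
  have hn : (Fintype.card X : ℝ) ≠ 0 := by
    exact_mod_cast (Fintype.card_pos_iff.mpr ⟨i⟩).ne'
  have hcard : (Aᶜ.card : ℝ) = Fintype.card X - A.card := by
    rw [card_compl, Nat.cast_sub (card_le_univ A)]
  unfold splitVec
  split_ifs
  · rw [hcard]; field_simp
  · ring

lemma splitVec_compl (A : Finset X) : splitVec Aᶜ = -splitVec A := by
  funext i
  by_cases hi : i ∈ A <;> simp [splitVec, hi]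

lemma linearIndependent_splitVec_of_disjoint {A C : Finset X} (hA : A.Nonempty)
    (hC : C.Nonempty) (hAC : A ≠ Cᶜ) (hdisj : Disjoint A C) :
    LinearIndependent ℝ ![splitVec A, splitVec C] := by
  obtain ⟨x, hxA, hxC⟩ : ∃ x, x ∉ A ∧ x ∉ C := by
    by_contra! h
    exact hAC (ext fun i => by
      rw [mem_compl]; exact ⟨fun hi => disjoint_left.mp hdisj hi, not_imp_comm.mp (h i)⟩)
  obtain ⟨y, hyA⟩ := hA
  obtain ⟨z, hzC⟩ := hC
  have hyC : y ∉ C := disjoint_left.mp hdisj hyA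
  have hzA : z ∉ A := disjoint_right.mp hdisj hzC
  rw [LinearIndependent.pair_iff]
  intro s t hst
  have hdiff (i : X) :
      s * (splitVec A i - splitVec A x) + t * (splitVec C i - splitVec C x) = 0 := by
    have hi := congrFun hst i
    have hx := congrFun hst x
    simp only [Pi.add_apply, Pi.smul_apply, smul_eq_mul, Pi.zero_apply] at hi hx
    linear_combination hi - hx
  constructor
  · simpa [splitVec_apply, hxA, hxC, hyA, hyC] using hdiff y
  · simpa [splitVec_apply, hxA, hxC, hzA, hzC] using hdiff z

end

open Finset in
theorem splitVec_linearIndependent {X : Type*} [Fintype X] [DecidableEq X]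
    (A C : Finset X) (hA : A.Nonempty) (hAc : Aᶜ.Nonempty)
    (hC : C.Nonempty) (hCc : Cᶜ.Nonempty)
    (hdist : A ≠ C ∧ A ≠ Cᶜ)
    (hcompat : A ∩ C = ∅ ∨ A ∩ Cᶜ = ∅ ∨ Aᶜ ∩ C = ∅ ∨ Aᶜ ∩ Cᶜ = ∅) :
    LinearIndependent ℝ ![splitVec A, splitVec C] := by
  obtain ⟨hAC, hACc⟩ := hdist
  rcases hcompat with h | h | h | h
  · exact linearIndependent_splitVec_of_disjoint hA hC hACc (disjoint_iff_inter_eq_empty.2 h)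
  · simpa [splitVec_compl] using linearIndependent_splitVec_of_disjoint hA hCc
      (by rwa [compl_compl]) (disjoint_iff_inter_eq_empty.2 h)
  · simpa [splitVec_compl] using linearIndependent_splitVec_of_disjoint hAc hC
      (compl_injective.ne hAC) (disjoint_iff_inter_eq_empty.2 h)
  · simpa [splitVec_compl] using linearIndependent_splitVec_of_disjoint hAc hCc
      (compl_injective.ne hACc) (disjoint_iff_inter_eq_empty.2 h)
end
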